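/- Let τ ∈ ℂ with Im τ > 0 and set q = exp(2πi·τ). Then, as u → 0 in ℂ ∖ {0} (with u in a sufficiently small punctured neighbourhood of 0, so that exp(2πiu) ≠ q^n for all n ∈ ℤ), the function u ↦ (2πi)² · 𝒲(exp(2πi·u), q) − 1/u² converges to the limit G₂(τ). In particular the singularity of (2πi)²𝒲(exp(2πiu), q) at u = 0 has principal part 1/u². -/

import Mathlib

/-!
With `e(z) = exp (2πiz)`, the `m`-th summand of `(2πi)² 𝒲(e(u), q)` is
`(2πi)² e(z) / (1 - e(z))² = π² / sin² (πz)` at `z = u + mτ`, and this equals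
`∑ₙ 1 / (z + n)²`: off the real axis this is the `q`-expansion of that series, and continuity
carries it to the real points of the punctured strip `|Re z| < 1/2`. Hence the `m = 0` summand
minus `1 / u²` is `∑_{n ≠ 0} 1 / (u + n)²`, which is continuous at `0`, while for small `u` the
summands with `m ≠ 0` are dominated by `|e(τ/2)|^|m|`. Dominated convergence then lets `u → 0`
term by term, and the limit of the `m`-th term is `∑_{n, (m,n) ≠ 0} 1 / (mτ + n)²`.
-/

open Real Complex Filter

open scoped Topology

-- `π² / sin² (π z)`, written through `exp (2πiz)`.
noncomputable def cscSqPi (z : ℂ) : ℂ :=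
  (2 * π * I) ^ 2 * (cexp (2 * π * I * z) / (1 - cexp (2 * π * I * z)) ^ 2)

lemma cexp_two_pi_I_mul_eq_one_iff {z : ℂ} : cexp (2 * π * I * z) = 1 ↔ ∃ n : ℤ, z = n := by
  have h : (2 * π * I : ℂ) ≠ 0 := by simp [pi_ne_zero, I_ne_zero]
  rw [Complex.exp_eq_one_iff]
  refine exists_congr fun n => ?_
  rw [mul_comm _ (2 * π * I : ℂ)]
  exact mul_right_inj' h

lemma continuousAt_cscSqPi {z : ℂ} (hz : ∀ n : ℤ, z ≠ n) : ContinuousAt cscSqPi z := by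
  have : (1 - cexp (2 * π * I * z)) ^ 2 ≠ 0 := by
    refine pow_ne_zero 2 (sub_ne_zero.mpr fun h => ?_)
    obtain ⟨n, hn⟩ := cexp_two_pi_I_mul_eq_one_iff.mp h.symm
    exact hz n hn
  unfold cscSqPi
  fun_prop (disch := assumption)

lemma cscSqPi_neg (z : ℂ) : cscSqPi (-z) = cscSqPi z := by
  rw [cscSqPi, cscSqPi, mul_neg, Complex.exp_neg]
  congr 1
  rcases eq_or_ne (cexp (2 * π * I * z)) 1 with h1 | h1
  · simp [h1]
  · have : 1 - cexp (2 * π * I * z) ≠ 0 := sub_ne_zero.mpr (Ne.symm h1)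
    field_simp
    ring

lemma cscSqPi_eq_tsum_of_im_pos {z : ℂ} (hz : 0 < z.im) :
    cscSqPi z = ∑' n : ℤ, 1 / (z + n) ^ 2 := by
  have h := EisensteinSeries.qExpansion_identity (k := 1) le_rfl ⟨z, hz⟩
  simp only [pow_one] at h
  rw [tsum_coe_mul_geometric_of_norm_lt_one
    (UpperHalfPlane.norm_exp_two_pi_I_lt_one ⟨z, hz⟩)] at h
  rw [cscSqPi, h]
  simp

lemma tsum_one_div_add_sq_neg (z : ℂ) :
    ∑' n : ℤ, 1 / (-z + n) ^ 2 = ∑' n : ℤ, 1 / (z + n) ^ 2 := by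
  rw [← (Equiv.neg ℤ).tsum_eq]
  congr 1 with n
  simp only [Equiv.neg_apply, Int.cast_neg]
  ring

lemma cscSqPi_eq_tsum_of_im_ne_zero {z : ℂ} (hz : z.im ≠ 0) :
    cscSqPi z = ∑' n : ℤ, 1 / (z + n) ^ 2 := by
  rcases hz.lt_or_gt with hz | hz
  · rw [← cscSqPi_neg, ← tsum_one_div_add_sq_neg, cscSqPi_eq_tsum_of_im_pos (by simpa using hz)]
  · exact cscSqPi_eq_tsum_of_im_pos hz

lemma add_intCast_ne_zero_of_abs_re_lt_one {z : ℂ} (hz : |z.re| < 1) {n : ℤ} (hn : n ≠ 0) :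
    z + n ≠ 0 := by
  intro h
  have : z.re = -n := by simpa using congr_arg re (eq_neg_of_add_eq_zero_left h)
  rw [this, abs_neg] at hz
  exact hn (Int.abs_lt_one_iff.mp (by exact_mod_cast hz))

lemma ne_intCast_of_abs_re_lt {z : ℂ} (hz : |z.re| < 1 / 2) (hz0 : z ≠ 0) (n : ℤ) : z ≠ n := by
  rintro rfl
  have : |(n : ℝ)| < 1 := by simpa using hz.trans one_half_lt_one
  exact hz0 (by simp [Int.abs_lt_one_iff.mp (by exact_mod_cast this)])

lemma norm_one_div_add_intCast_sq_le {z : ℂ} (hz : |z.re| ≤ 1 / 2) {n : ℤ} (hn : n ≠ 0) :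
    ‖1 / (z + n) ^ 2‖ ≤ 4 / (n : ℝ) ^ 2 := by
  have hn1 : (1 : ℝ) ≤ |(n : ℝ)| := by exact_mod_cast Int.one_le_abs hn
  have hre : |(n : ℝ)| / 2 ≤ ‖z + n‖ := by
    have := abs_re_le_norm (z + n)
    have := abs_sub_abs_le_abs_sub (n : ℝ) (-z.re)
    simp only [add_re, intCast_re] at *
    rw [abs_neg, sub_neg_eq_add, add_comm] at this
    linarith
  have hpos : 0 < ‖z + n‖ := by linarith
  rw [norm_div, norm_one, norm_pow, div_le_div_iff₀ (by positivity) (by positivity), one_mul,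
    ← sq_abs (n : ℝ)]
  nlinarith [pow_le_pow_left₀ (by positivity) hre 2]

lemma summable_four_div_intCast_sq : Summable fun n : ℤ => 4 / (n : ℝ) ^ 2 := by
  simpa [div_eq_mul_inv] using ((summable_one_div_int_pow (p := 2)).mpr one_lt_two).mul_left 4

lemma summable_one_div_add_intCast_sq_ne_zero {z : ℂ} (hz : |z.re| ≤ 1 / 2) :
    Summable fun n : {n : ℤ // n ≠ 0} => 1 / (z + n) ^ 2 :=
  (summable_four_div_intCast_sq.subtype _).of_norm_bounded
    fun n => norm_one_div_add_intCast_sq_le hz n.2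

lemma continuousOn_tsum_one_div_add_intCast_sq_ne_zero :
    ContinuousOn (fun z : ℂ => ∑' n : {n : ℤ // n ≠ 0}, 1 / (z + n) ^ 2)
      {z | |z.re| < 1 / 2} := by
  refine continuousOn_tsum (fun n => ?_) (summable_four_div_intCast_sq.subtype _)
    fun n z hz => norm_one_div_add_intCast_sq_le (le_of_lt hz) n.2
  exact continuousOn_const.div (by fun_prop) fun z hz =>
    pow_ne_zero 2 (add_intCast_ne_zero_of_abs_re_lt_one (hz.trans one_half_lt_one) n.2)

lemma tsum_int_eq_add_tsum_ne_zero {f : ℤ → ℂ} (hf : Summable fun n : {n : ℤ // n ≠ 0} => f n) :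
    ∑' n, f n = f 0 + ∑' n : {n : ℤ // n ≠ 0}, f n := by
  have hf' : Summable f := (summable_subtype_and_compl (s := {0})).mp
    ⟨(Set.finite_singleton 0).summable _, hf⟩
  rw [← hf'.tsum_subtype_add_tsum_subtype_compl {0}, tsum_singleton 0 f]
  rfl

lemma dense_setOf_im_ne_zero : Dense {z : ℂ | z.im ≠ 0} := by
  rw [dense_iff_closure_eq]
  exact (closure_preimage_im {0}ᶜ).trans (by rw [(dense_compl_singleton (0 : ℝ)).closure_eq]; rfl)

-- The identity is known off the real axis; continuity extends it to the punctured strip.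
lemma cscSqPi_sub_one_div_sq_eq_tsum {z : ℂ} (hz : |z.re| < 1 / 2) (hz0 : z ≠ 0) :
    cscSqPi z - 1 / z ^ 2 = ∑' n : {n : ℤ // n ≠ 0}, 1 / (z + n) ^ 2 := by
  set S : Set ℂ := {z | |z.re| < 1 / 2} \ {0}
  have hS : IsOpen S := (isOpen_lt (by fun_prop) continuous_const).sdiff isClosed_singleton
  refine Set.EqOn.of_subset_closure (f := fun z => cscSqPi z - 1 / z ^ 2)
    (g := fun z => ∑' n : {n : ℤ // n ≠ 0}, 1 / (z + n) ^ 2) (s := S ∩ {z | z.im ≠ 0}) ?_ ?_ ?_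
    Set.inter_subset_left (dense_setOf_im_ne_zero.open_subset_closure_inter hS) ⟨hz, hz0⟩
  · rintro z ⟨⟨hz, -⟩, him⟩
    have hz : |z.re| ≤ 1 / 2 := le_of_lt hz
    dsimp only
    rw [cscSqPi_eq_tsum_of_im_ne_zero him, tsum_int_eq_add_tsum_ne_zero
      (f := fun n : ℤ => 1 / (z + n) ^ 2) (summable_one_div_add_intCast_sq_ne_zero hz)]
    simp
  · intro z ⟨hz, hz0⟩
    exact ((continuousAt_cscSqPi (ne_intCast_of_abs_re_lt hz hz0)).sub
      (continuousAt_const.div (continuousAt_id.pow 2) (pow_ne_zero 2 hz0))).continuousWithinAt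
  · exact continuousOn_tsum_one_div_add_intCast_sq_ne_zero.mono Set.sdiff_subset

lemma tendsto_cscSqPi_sub_one_div_sq :
    Tendsto (fun u => cscSqPi u - 1 / u ^ 2) (𝓝[≠] 0)
      (𝓝 (∑' n : {n : ℤ // n ≠ 0}, 1 / (n : ℂ) ^ 2)) := by
  have hS : {z : ℂ | |z.re| < 1 / 2} ∈ 𝓝 0 :=
    (isOpen_lt (by fun_prop) continuous_const).mem_nhds (by simp)
  have h := (continuousOn_tsum_one_div_add_intCast_sq_ne_zero.continuousAt hS).tendsto
  simp only [zero_add] at h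
  refine (h.mono_left nhdsWithin_le_nhds).congr' ?_
  filter_upwards [nhdsWithin_le_nhds hS, self_mem_nhdsWithin] with u hu hu0
  exact (cscSqPi_sub_one_div_sq_eq_tsum hu hu0).symm

lemma norm_div_one_sub_sq_le {w : ℂ} {a r : ℝ} (ha : ‖w‖ ≤ a) (hr : ‖w‖ ≤ r) (hr1 : r < 1) :
    ‖w / (1 - w) ^ 2‖ ≤ a / (1 - r) ^ 2 := by
  have h1 : 1 - r ≤ ‖1 - w‖ := by
    have := norm_sub_norm_le (1 : ℂ) w
    rw [norm_one] at this
    linarith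
  rw [norm_div, norm_pow]
  exact div_le_div₀ ((norm_nonneg w).trans ha) ha (by nlinarith)
    (pow_le_pow_left₀ (by linarith) h1 2)

lemma norm_cexp_two_pi_I_mul (z : ℂ) : ‖cexp (2 * π * I * z)‖ = Real.exp (-(2 * π * z.im)) := by
  rw [norm_exp]
  congr 1
  simp

lemma norm_cscSqPi_add_nat_mul_le {τ u : ℂ} (hτ : 0 < τ.im) (hu : |u.im| ≤ τ.im / 2) {m : ℕ}
    (hm : m ≠ 0) :
    ‖cscSqPi (u + m * τ)‖ ≤
      (2 * π) ^ 2 * Real.exp (-π * τ.im) ^ m / (1 - Real.exp (-π * τ.im)) ^ 2 := by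
  set ρ := Real.exp (-π * τ.im)
  have hρ1 : ρ < 1 := Real.exp_lt_one_iff.mpr (by nlinarith [pi_pos])
  have hw : ‖cexp (2 * π * I * (u + m * τ))‖ ≤ ρ ^ m := by
    have him : (u + m * τ).im = u.im + m * τ.im := by simp
    have hm1 : (1 : ℝ) ≤ m := by exact_mod_cast Nat.one_le_iff_ne_zero.mpr hm
    have hu' := (abs_le.mp hu).1
    have key : 0 ≤ 2 * u.im + m * τ.im := by nlinarith
    rw [norm_cexp_two_pi_I_mul, ← Real.exp_nat_mul, Real.exp_le_exp, him]
    nlinarith [mul_nonneg pi_pos.le key]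
  have hρm : ρ ^ m ≤ ρ := pow_le_of_le_one (Real.exp_pos _).le hρ1.le hm
  have hc : ‖(2 * π * I : ℂ) ^ 2‖ = (2 * π) ^ 2 := by simp [abs_of_pos pi_pos]
  rw [cscSqPi, norm_mul, hc, mul_div_assoc]
  gcongr
  exact norm_div_one_sub_sq_le hw (hw.trans hρm) hρ1

lemma norm_cscSqPi_add_int_mul_le {τ u : ℂ} (hτ : 0 < τ.im) (hu : |u.im| ≤ τ.im / 2) {m : ℤ}
    (hm : m ≠ 0) :
    ‖cscSqPi (u + m * τ)‖ ≤
      (2 * π) ^ 2 * Real.exp (-π * τ.im) ^ m.natAbs / (1 - Real.exp (-π * τ.im)) ^ 2 := by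
  obtain ⟨k, rfl | rfl⟩ := Int.eq_nat_or_neg m
  · exact norm_cscSqPi_add_nat_mul_le hτ hu (by simpa using hm)
  · have h := norm_cscSqPi_add_nat_mul_le hτ (u := -u) (by simpa using hu) (m := k)
      (by simpa using hm)
    rw [← cscSqPi_neg, Int.natAbs_neg, Int.natAbs_natCast]
    convert h using 3
    push_cast
    ring

lemma summable_pow_natAbs {ρ : ℝ} (h0 : 0 ≤ ρ) (h1 : ρ < 1) :
    Summable fun m : ℤ => ρ ^ m.natAbs :=
  .of_nat_of_neg (by simpa using summable_geometric_of_lt_one h0 h1)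
    (by simpa using summable_geometric_of_lt_one h0 h1)

lemma tsum_subtype_pair_ne_zero (τ : ℂ) :
    ∑' n : {n : ℤ // ((0 : ℤ), n) ≠ (0, 0)}, 1 / (((0 : ℤ) : ℂ) * τ + n) ^ 2 =
      ∑' n : {n : ℤ // n ≠ 0}, 1 / (n : ℂ) ^ 2 := by
  simp only [Int.cast_zero, zero_mul, zero_add]
  exact ((Equiv.subtypeEquivRight (p := fun n : ℤ => n ≠ 0)
    (q := fun n : ℤ => ((0 : ℤ), n) ≠ (0, 0)) fun n => by simp).tsum_eq
    fun n => 1 / ((n : ℤ) : ℂ) ^ 2).symm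

lemma cscSqPi_int_mul_eq_tsum {τ : ℂ} (hτ : τ.im ≠ 0) {m : ℤ} (hm : m ≠ 0) :
    cscSqPi (m * τ) = ∑' n : {n : ℤ // (m, n) ≠ (0, 0)}, 1 / ((m : ℂ) * τ + n) ^ 2 := by
  rw [cscSqPi_eq_tsum_of_im_ne_zero (by simp [hm, hτ])]
  exact ((Equiv.subtypeUnivEquiv (p := fun n : ℤ => (m, n) ≠ (0, 0))
    fun n => by simp [hm]).tsum_eq fun n => 1 / ((m : ℂ) * τ + n) ^ 2).symm

theorem tendsto_tsum_cscSqPi_add_int_mul_sub_one_div_sq {τ : ℂ} (hτ : 0 < τ.im) :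
    Tendsto (fun u => ∑' m : ℤ, cscSqPi (u + m * τ) - 1 / u ^ 2) (𝓝[≠] 0)
      (𝓝 (∑' m : ℤ, ∑' n : {n : ℤ // (m, n) ≠ (0, 0)}, 1 / ((m : ℂ) * τ + n) ^ 2)) := by
  set ρ := Real.exp (-π * τ.im)
  set b : ℤ → ℝ := fun m => (2 * π) ^ 2 * ρ ^ m.natAbs / (1 - ρ) ^ 2
  have hb : Summable b := ((summable_pow_natAbs (Real.exp_pos _).le
    (Real.exp_lt_one_iff.mpr (by nlinarith [pi_pos]))).mul_left _).div_const _
  set F : ℂ → ℤ → ℂ := fun u m => cscSqPi (u + m * τ) - if m = 0 then 1 / u ^ 2 else 0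
  set A : ℤ → ℂ := fun m => ∑' n : {n : ℤ // (m, n) ≠ (0, 0)}, 1 / ((m : ℂ) * τ + n) ^ 2
  have hsmall : ∀ᶠ u in 𝓝[≠] (0 : ℂ), |u.im| ≤ τ.im / 2 := by
    refine nhdsWithin_le_nhds
      (mem_of_superset (Metric.closedBall_mem_nhds 0 (half_pos hτ)) fun u hu => ?_)
    exact (abs_im_le_norm u).trans (by simpa using hu)
  have hlim : ∀ m, Tendsto (F · m) (𝓝[≠] 0) (𝓝 (A m)) := by
    intro m
    rcases eq_or_ne m 0 with rfl | hm
    · have h := tendsto_cscSqPi_sub_one_div_sq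
      rw [← tsum_subtype_pair_ne_zero τ] at h
      simpa [F, A] using h
    · have hmτ : ∀ n : ℤ, (m * τ : ℂ) ≠ n := fun n h => by simpa [hm, hτ.ne'] using congr_arg im h
      have h := (continuousAt_cscSqPi hmτ).tendsto.comp
        ((continuous_add_const _).tendsto' 0 _ (zero_add _))
      simpa [F, A, hm, cscSqPi_int_mul_eq_tsum hτ.ne' hm, Function.comp_def] using
        h.mono_left nhdsWithin_le_nhds
  have hF0 := (hlim 0).norm.eventually (gt_mem_nhds (lt_add_one ‖A 0‖))
  have hsum : ∀ᶠ u in 𝓝[≠] 0, ∑' m, F u m = ∑' m : ℤ, cscSqPi (u + m * τ) - 1 / u ^ 2 := by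
    filter_upwards [hsmall] with u hu
    have hs : Summable fun m : ℤ => cscSqPi (u + m * τ) :=
      .of_norm_bounded_eventually hb ((eventually_cofinite_ne 0).mono fun m hm =>
        norm_cscSqPi_add_int_mul_le hτ hu hm)
    rw [hs.tsum_sub (hasSum_ite_eq 0 (1 / u ^ 2)).summable, tsum_ite_eq]
  refine (tendsto_tsum_of_dominated_convergence (hb.update 0 (‖A 0‖ + 1)) hlim ?_).congr' hsum
  filter_upwards [hsmall, hF0] with u hu hu0 m
  rcases eq_or_ne m 0 with rfl | hm
  · simpa using hu0.le
  · simp only [F, hm, if_false, sub_zero, Function.update_of_ne hm]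
    exact norm_cscSqPi_add_int_mul_le hτ hu hm

/-- with `q = exp(2πiτ)`, as `u → 0` (through nonzero values),
`(2πi)² 𝒲(exp(2πiu), q) − 1/u²` tends to `G₂(τ)`; i.e. the principal part of
`(2πi)² 𝒲(exp(2πiu), q)` at `u = 0` is `1/u²`. -/
theorem winding_W_principal_part (τ : ℂ) (hτ : 0 < τ.im)
    (q : ℂ) (hq : q = Complex.exp (2 * (π : ℂ) * Complex.I * τ)) :
    Tendsto
      (fun u : ℂ =>
        (2 * (π : ℂ) * Complex.I) ^ 2 *
            (∑' m : ℤ, Complex.exp (2 * (π : ℂ) * Complex.I * u) * q ^ m /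
              (1 - Complex.exp (2 * (π : ℂ) * Complex.I * u) * q ^ m) ^ 2)
          - 1 / u ^ 2)
      (nhdsWithin 0 {u : ℂ | u ≠ 0})
      (nhds (∑' m : ℤ, ∑' n : {n : ℤ // (m, n) ≠ (0, 0)},
        1 / ((m : ℂ) * τ + ((n : ℤ) : ℂ)) ^ 2)) := by
  have hterm : ∀ u : ℂ, (2 * (π : ℂ) * I) ^ 2 *
      (∑' m : ℤ, cexp (2 * π * I * u) * q ^ m / (1 - cexp (2 * π * I * u) * q ^ m) ^ 2) =
      ∑' m : ℤ, cscSqPi (u + m * τ) := by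
    intro u
    rw [← tsum_mul_left]
    congr 1 with m
    rw [hq, ← Complex.exp_int_mul, ← Complex.exp_add, cscSqPi, mul_add, mul_left_comm]
  simp_rw [hterm]
  exact tendsto_tsum_cscSqPi_add_int_mul_sub_one_div_sq hτ
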